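/- Let ℓ_1, …, ℓ_n : ℝ^d → ℝ be convex, nonnegative, differentiable, and β-smooth, and suppose w* satisfies ℓ_i(w*) ≤ ε for all i. Run SGD with replacement with w_1 = 0 and η ≤ 1/β. Then for every realization of the indices, the average iterate w̄_T = (1/T) Σ_{t=1}^T w_t satisfies ‖w̄_T‖ ≤ 2‖w*‖ + 2√(ηεT). -/

import Mathlib

/-!
For a convex, nonnegative, β-smooth loss `f`, a gradient step `x ↦ x - η ∇f(x)` with `η ≤ 1/β`
moves `x` closer to any `u` up to an additive `2η f(u)`: convexity gives
`⟪∇f(x), x - u⟫ ≥ f(x) - f(u)`, and smoothness with `f ≥ 0` gives `‖∇f(x)‖² ≤ 2β f(x)`, so the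
quadratic term `η²‖∇f(x)‖²` is paid for by `2η f(x)`. Summing from `w₁ = 0` gives
`‖w_t - w*‖² ≤ ‖w*‖² + 2ηεT`, so every iterate, and hence their average, lies in the ball of
radius `2‖w*‖ + 2√(ηεT)`.
-/

open Set

section GradientLipschitz

variable {F : Type*} [NormedAddCommGroup F] [InnerProductSpace ℝ F] [CompleteSpace F]

theorem HasGradientAt.hasDerivAt_comp_add_smul {f : F → ℝ} {g' x v : F} {t : ℝ}
    (h : HasGradientAt f g' (x + t • v)) :
    HasDerivAt (fun s : ℝ => f (x + s • v)) (inner ℝ g' v) t := by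
  have hline : HasDerivAt (fun s : ℝ => x + s • v) v t := by
    simpa using ((hasDerivAt_id t).smul_const v).const_add x
  exact h.hasFDerivAt.comp_hasDerivAt t hline

theorem ConvexOn.add_inner_sub_le_of_hasGradientAt {f : F → ℝ} {g' x : F}
    (hf : ConvexOn ℝ univ f) (h : HasGradientAt f g' x) (y : F) :
    f x + inner ℝ g' (y - x) ≤ f y := by
  have hline : ConvexOn ℝ univ (fun t : ℝ => f (x + t • (y - x))) := by
    simpa [Function.comp_def, AffineMap.lineMap_apply_module', add_comm] using
      hf.comp_affineMap (AffineMap.lineMap x y)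
  have hderiv := HasGradientAt.hasDerivAt_comp_add_smul (t := 0) (v := y - x) (by simpa using h)
  have := hline.le_slope_of_hasDerivAt (mem_univ 0) (mem_univ 1) one_pos hderiv
  simp only [slope_def_field, one_smul, add_sub_cancel, zero_smul, add_zero, sub_zero,
    div_one] at this
  linarith

theorem le_add_inner_add_sq_of_lipschitz_gradient {f : F → ℝ} {g : F → F} {β : ℝ}
    (hgrad : ∀ u, HasGradientAt f (g u) u) (hlip : ∀ u v, ‖g u - g v‖ ≤ β * ‖u - v‖)
    (x y : F) :
    f y ≤ f x + inner ℝ (g x) (y - x) + β / 2 * ‖y - x‖ ^ 2 := by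
  set v := y - x
  let ψ : ℝ → ℝ := fun t => f (x + t • v) - t * inner ℝ (g x) v - β / 2 * t ^ 2 * ‖v‖ ^ 2
  have hψ : ∀ t, HasDerivAt ψ
      (inner ℝ (g (x + t • v)) v - inner ℝ (g x) v - β * t * ‖v‖ ^ 2) t := by
    intro t
    have := ((HasGradientAt.hasDerivAt_comp_add_smul (hgrad (x + t • v))).sub
      ((hasDerivAt_id t).mul_const (inner ℝ (g x) v))).sub
      (((hasDerivAt_pow 2 t).const_mul (β / 2)).mul_const (‖v‖ ^ 2))
    refine this.congr_deriv ?_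
    push_cast
    ring
  have hψ_nonpos : ∀ t ∈ Ioo (0 : ℝ) 1,
      inner ℝ (g (x + t • v)) v - inner ℝ (g x) v - β * t * ‖v‖ ^ 2 ≤ 0 := by
    rintro t ⟨ht, -⟩
    have : inner ℝ (g (x + t • v) - g x) v ≤ β * t * ‖v‖ ^ 2 :=
      calc inner ℝ (g (x + t • v) - g x) v ≤ ‖g (x + t • v) - g x‖ * ‖v‖ := real_inner_le_norm _ _
        _ ≤ β * ‖t • v‖ * ‖v‖ := by
          gcongr
          simpa using hlip (x + t • v) x
        _ = β * t * ‖v‖ ^ 2 := by rw [norm_smul, Real.norm_of_nonneg ht.le]; ring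
    rw [inner_sub_left] at this
    linarith
  have hanti : AntitoneOn ψ (Icc 0 1) :=
    antitoneOn_of_hasDerivWithinAt_nonpos (convex_Icc 0 1)
      (fun t _ => (hψ t).continuousAt.continuousWithinAt)
      (fun t _ => (hψ t).hasDerivWithinAt) (by simpa using hψ_nonpos)
  have hψ0 : ψ 0 = f x := by simp [ψ]
  have hψ1 : ψ 1 = f y - inner ℝ (g x) v - β / 2 * ‖v‖ ^ 2 := by simp [ψ, v]
  linarith [hanti (left_mem_Icc.mpr zero_le_one) (right_mem_Icc.mpr zero_le_one) zero_le_one]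

theorem norm_sq_le_of_lipschitz_gradient_of_nonneg {f : F → ℝ} {g : F → F} {β : ℝ}
    (hβ : 0 < β) (hnonneg : ∀ u, 0 ≤ f u) (hgrad : ∀ u, HasGradientAt f (g u) u)
    (hlip : ∀ u v, ‖g u - g v‖ ≤ β * ‖u - v‖) (x : F) :
    ‖g x‖ ^ 2 ≤ 2 * β * f x := by
  -- a gradient step of length `1/β` lowers `f` by `‖∇f(x)‖²/(2β)`, and `f` stays nonnegative
  have hdesc := le_add_inner_add_sq_of_lipschitz_gradient hgrad hlip x (x - β⁻¹ • g x)
  rw [sub_sub_cancel_left, inner_neg_right, real_inner_smul_right, real_inner_self_eq_norm_sq,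
    norm_neg, norm_smul, mul_pow, Real.norm_eq_abs, sq_abs] at hdesc
  have hstep := hnonneg (x - β⁻¹ • g x)
  generalize f (x - β⁻¹ • g x) = c at hdesc hstep
  have : β⁻¹ * ‖g x‖ ^ 2 ≤ 2 * f x := by
    field_simp at hdesc ⊢
    nlinarith
  rwa [inv_mul_le_iff₀ hβ, ← mul_assoc, mul_comm β] at this

theorem norm_sub_smul_gradient_sub_sq_le {f : F → ℝ} {g : F → F} {β η : ℝ}
    (hβ : 0 < β) (hη : 0 ≤ η) (hηβ : η * β ≤ 1) (hconv : ConvexOn ℝ univ f)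
    (hnonneg : ∀ u, 0 ≤ f u) (hgrad : ∀ u, HasGradientAt f (g u) u)
    (hlip : ∀ u v, ‖g u - g v‖ ≤ β * ‖u - v‖) (x u : F) :
    ‖x - η • g x - u‖ ^ 2 ≤ ‖x - u‖ ^ 2 + 2 * η * f u := by
  have hfirst := hconv.add_inner_sub_le_of_hasGradientAt (hgrad x) u
  have hgrad_sq : η ^ 2 * ‖g x‖ ^ 2 ≤ 2 * η * f x :=
    calc η ^ 2 * ‖g x‖ ^ 2 ≤ η ^ 2 * (2 * β * f x) := by
          gcongr; exact norm_sq_le_of_lipschitz_gradient_of_nonneg hβ hnonneg hgrad hlip x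
      _ = 2 * η * f x * (η * β) := by ring
      _ ≤ 2 * η * f x := mul_le_of_le_one_right (by have := hnonneg x; positivity) hηβ
  have hexpand : ‖x - η • g x - u‖ ^ 2
      = ‖x - u‖ ^ 2 + 2 * η * inner ℝ (g x) (u - x) + η ^ 2 * ‖g x‖ ^ 2 := by
    rw [sub_right_comm, norm_sub_sq_real, real_inner_smul_right, norm_smul, mul_pow,
      Real.norm_eq_abs, sq_abs, ← neg_sub u x, inner_neg_left, real_inner_comm]
    ring
  rw [hexpand]
  linarith [mul_le_mul_of_nonneg_left hfirst (by positivity : (0 : ℝ) ≤ 2 * η)]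

end GradientLipschitz

theorem le_add_mul_sub_of_le_add {a : ℕ → ℝ} {c : ℝ} {m : ℕ}
    (h : ∀ t, m ≤ t → a (t + 1) ≤ a t + c) :
    ∀ t, m ≤ t → a t ≤ a m + c * (t - m) := by
  intro t ht
  induction t, ht using Nat.le_induction with
  | base => simp
  | succ t ht ih => push_cast; linarith [h t ht]

theorem norm_average_le {ι E : Type*} [NormedAddCommGroup E] [NormedSpace ℝ E]
    {s : Finset ι} (hs : s.Nonempty) {f : ι → E} {C : ℝ} (h : ∀ i ∈ s, ‖f i‖ ≤ C) :
    ‖(1 / (s.card : ℝ)) • ∑ i ∈ s, f i‖ ≤ C := by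
  have hcard : (0 : ℝ) < s.card := by exact_mod_cast hs.card_pos
  rw [norm_smul, Real.norm_of_nonneg (by positivity), one_div, inv_mul_le_iff₀ hcard]
  simpa [mul_comm] using norm_sum_le_of_le s h

theorem sgd_dist_sq_le {F ι : Type*} [NormedAddCommGroup F] [InnerProductSpace ℝ F]
    [CompleteSpace F] {ℓ : ι → F → ℝ} {g : ι → F → F} {β η ε : ℝ}
    (hβ : 0 < β) (hη : 0 ≤ η) (hηβ : η * β ≤ 1) (hconv : ∀ i, ConvexOn ℝ univ (ℓ i))
    (hnonneg : ∀ i w, 0 ≤ ℓ i w) (hgrad : ∀ i w, HasGradientAt (ℓ i) (g i w) w)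
    (hlip : ∀ i u v, ‖g i u - g i v‖ ≤ β * ‖u - v‖) {u : F} (hu : ∀ i, ℓ i u ≤ ε)
    {idx : ℕ → ι} {w : ℕ → F} (hupd : ∀ t, 1 ≤ t → w (t + 1) = w t - η • g (idx t) (w t)) :
    ∀ t, 1 ≤ t → ‖w t - u‖ ^ 2 ≤ ‖w 1 - u‖ ^ 2 + 2 * η * ε * (t - 1) := by
  have hstep : ∀ t, 1 ≤ t → ‖w (t + 1) - u‖ ^ 2 ≤ ‖w t - u‖ ^ 2 + 2 * η * ε := fun t ht => by
    rw [hupd t ht]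
    have := norm_sub_smul_gradient_sub_sq_le hβ hη hηβ (hconv (idx t)) (hnonneg (idx t))
      (hgrad (idx t)) (hlip (idx t)) (w t) u
    nlinarith [hu (idx t)]
  simpa using le_add_mul_sub_of_le_add (a := fun t => ‖w t - u‖ ^ 2) hstep

theorem sgd_average_iterate_norm_bound_general {d n : ℕ}
    (ℓ : Fin n → EuclideanSpace ℝ (Fin d) → ℝ)
    (g : Fin n → EuclideanSpace ℝ (Fin d) → EuclideanSpace ℝ (Fin d))
    (β η ε : ℝ) (hη : 0 < η) (hηβ : η ≤ 1 / β)
    (hconv : ∀ i, ConvexOn ℝ Set.univ (ℓ i))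
    (hnonneg : ∀ i w, 0 ≤ ℓ i w)
    (hgrad : ∀ i w, HasGradientAt (ℓ i) (g i w) w)
    (hlip : ∀ i u v, ‖g i u - g i v‖ ≤ β * ‖u - v‖)
    (wstar : EuclideanSpace ℝ (Fin d)) (hstar : ∀ i, ℓ i wstar ≤ ε)
    (idx : ℕ → Fin n)
    (w : ℕ → EuclideanSpace ℝ (Fin d))
    (hw1 : w 1 = 0)
    (hupd : ∀ t, 1 ≤ t → w (t + 1) = w t - η • g (idx t) (w t)) :
    ∀ T : ℕ, 1 ≤ T →
      ‖(1 / (T : ℝ)) • ∑ t ∈ Finset.Icc 1 T, w t‖ ≤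
        2 * ‖wstar‖ + 2 * Real.sqrt (η * ε * T) := by
  intro T hT
  have hβ : 0 < β := one_div_pos.mp (hη.trans_le hηβ)
  have hε : 0 ≤ ε := (hnonneg (idx 0) wstar).trans (hstar (idx 0))
  have hdist := sgd_dist_sq_le hβ hη.le ((le_div_iff₀ hβ).mp hηβ) hconv hnonneg hgrad hlip hstar
    hupd
  have hiterate : ∀ t ∈ Finset.Icc 1 T, ‖w t‖ ≤ 2 * ‖wstar‖ + 2 * Real.sqrt (η * ε * T) := by
    intro t ht
    obtain ⟨h1t, htT⟩ := Finset.mem_Icc.mp ht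
    have htT' : (t : ℝ) ≤ T := by exact_mod_cast htT
    have hsqrt := Real.sq_sqrt (by positivity : 0 ≤ η * ε * T)
    have hsq : ‖w t - wstar‖ ^ 2 ≤ (‖wstar‖ + 2 * Real.sqrt (η * ε * T)) ^ 2 := by
      have := hdist t h1t
      rw [hw1, zero_sub, norm_neg] at this
      nlinarith [Real.sqrt_nonneg (η * ε * T), norm_nonneg wstar, mul_nonneg hη.le hε]
    have := le_of_pow_le_pow_left₀ two_ne_zero (by positivity) hsq
    linarith [norm_le_insert' (w t) wstar]
  have hcard : (Finset.Icc 1 T).card = T := by simp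
  have := norm_average_le ⟨1, Finset.mem_Icc.mpr ⟨le_rfl, hT⟩⟩ hiterate
  rwa [hcard] at this

theorem sgd_average_iterate_norm_bound {d n : ℕ}
    (ℓ : Fin n → EuclideanSpace ℝ (Fin d) → ℝ)
    (g : Fin n → EuclideanSpace ℝ (Fin d) → EuclideanSpace ℝ (Fin d))
    (β η ε : ℝ) (hβ : 0 < β) (hη : 0 < η) (hηβ : η ≤ 1 / β) (hε : 0 < ε)
    (hconv : ∀ i, ConvexOn ℝ Set.univ (ℓ i))
    (hnonneg : ∀ i w, 0 ≤ ℓ i w)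
    (hgrad : ∀ i w, HasGradientAt (ℓ i) (g i w) w)
    (hlip : ∀ i u v, ‖g i u - g i v‖ ≤ β * ‖u - v‖)
    (wstar : EuclideanSpace ℝ (Fin d)) (hstar : ∀ i, ℓ i wstar ≤ ε)
    (idx : ℕ → Fin n)
    (w : ℕ → EuclideanSpace ℝ (Fin d))
    (hw1 : w 1 = 0)
    (hupd : ∀ t, 1 ≤ t → w (t + 1) = w t - η • g (idx t) (w t)) :
    ∀ T : ℕ, 1 ≤ T →
      ‖(1 / (T : ℝ)) • ∑ t ∈ Finset.Icc 1 T, w t‖ ≤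
        2 * ‖wstar‖ + 2 * Real.sqrt (η * ε * T) :=
  sgd_average_iterate_norm_bound_general ℓ g β η ε hη hηβ hconv hnonneg hgrad hlip wstar hstar idx w
    hw1 hupd
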